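/- arXiv:2502.00807 — 3 statements merged into one kernel-verified Lean document; each statement's English description precedes it below -/
import Mathlib

section
/- Thermodynamic feasibility excludes internal cycles: if v ∈ ℝⁿ satisfies S v = 0, and there exist μ ∈ ℝᵐ and Δ = S_I^⊤ μ such that Δ_i v_i < 0 for every internal reaction i with v_i ≠ 0, then the restriction of v to the internal reactions cannot itself be a nonzero vector in null(S_I). More precisely, for any nonzero ℓ supported on internal reactions with S_I ℓ_I = 0 and sign(ℓ_i) = sign(v_i) whenever ℓ_i ≠ 0, one derives a contradiction; hence no internal cycle is sign-compatible with v. -/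
/-!
Pairing a cycle `ℓ` (with `S ℓ = 0`) against a potential difference `Δ = Sᵀ μ` gives
`ℓ ⬝ᵥ Δ = (S ℓ) ⬝ᵥ μ = 0`. Sign compatibility of `ℓ` with `v`, together with `Δ i v i < 0`,
makes every nonzero term `ℓ i Δ i` of that sum negative, so the sum is negative.
-/

open Matrix

lemma Matrix.dotProduct_transpose_mulVec_eq_zero {R m n : Type*} [CommSemiring R]
    [Fintype m] [Fintype n] {S : Matrix m n R} {ℓ : n → R} (hℓ : S *ᵥ ℓ = 0) (μ : m → R) :
    ℓ ⬝ᵥ (Sᵀ *ᵥ μ) = 0 := by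
  rw [dotProduct_mulVec, vecMul_transpose, hℓ, zero_dotProduct]

section SignCompatible

variable {α : Type*} [CommRing α] [LinearOrder α] [IsStrictOrderedRing α]

lemma mul_neg_of_mul_pos_of_mul_neg {a b c : α} (hac : 0 < a * c) (hbc : b * c < 0) :
    a * b < 0 := by
  have hc : 0 < c * c := mul_self_pos.mpr (right_ne_zero_of_mul hac.ne')
  have : a * b * (c * c) < 0 :=
    calc a * b * (c * c) = (a * c) * (b * c) := by ring
      _ < 0 := mul_neg_of_pos_of_neg hac hbc
  exact neg_of_mul_neg_left this hc.le

lemma dotProduct_neg_of_sign_compatible {ι : Type*} [Fintype ι] {ℓ v Δ : ι → α} (hℓ : ℓ ≠ 0)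
    (hsign : ∀ i, ℓ i ≠ 0 → 0 < ℓ i * v i) (hΔv : ∀ i, v i ≠ 0 → Δ i * v i < 0) :
    ℓ ⬝ᵥ Δ < 0 := by
  have hterm : ∀ i, ℓ i ≠ 0 → ℓ i * Δ i < 0 := fun i hi ↦
    mul_neg_of_mul_pos_of_mul_neg (hsign i hi) (hΔv i (right_ne_zero_of_mul (hsign i hi).ne'))
  obtain ⟨i, hi⟩ := Function.ne_iff.mp hℓ
  refine Finset.sum_neg' (fun j _ ↦ ?_) ⟨i, Finset.mem_univ i, hterm i hi⟩
  by_cases hj : ℓ j = 0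
  · simp [hj]
  · exact (hterm j hj).le

end SignCompatible

/-- Thermodynamic feasibility excludes sign-compatible internal cycles. -/
theorem thermo_feasible_no_sign_compatible_cycle
    {m p : ℕ} (SI : Matrix (Fin m) (Fin p) ℝ) (v : Fin p → ℝ)
    (μ : Fin m → ℝ) (Δ : Fin p → ℝ)
    (hΔ : Δ = SI.transpose.mulVec μ)
    (hfeas : ∀ i : Fin p, v i ≠ 0 → Δ i * v i < 0) :
    ¬ ∃ ℓ : Fin p → ℝ, ℓ ≠ 0 ∧ SI.mulVec ℓ = 0 ∧
      (∀ i : Fin p, ℓ i ≠ 0 → ℓ i * v i > 0) := by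
  rintro ⟨ℓ, hℓ, hcycle, hsign⟩
  have hzero : ℓ ⬝ᵥ Δ = 0 := hΔ ▸ dotProduct_transpose_mulVec_eq_zero hcycle μ
  exact (dotProduct_neg_of_sign_compatible hℓ hsign hfeas).ne hzero
end

section
/- Correctness of the big-M reformulation: suppose M ≥ max_i max(|l_i|, |u_i|) holds for the flux bounds and M ≥ ε > 0. Then v (with l ≤ v ≤ u) admits μ, Δ = S_I^⊤ μ satisfying, for all i ∈ I, either (v_i ≥ 0 and Δ_i ≤ −ε) or (v_i ≤ 0 and Δ_i ≥ ε) with additionally |Δ_i| ≤ M, if and only if there exists a ∈ {0,1}^{|I|} such that for all i ∈ I: −M a_i + ε(1−a_i) ≤ Δ_i ≤ −ε a_i + M(1−a_i) and −M(1−a_i) ≤ v_i ≤ M a_i. -/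
/-!
Each index is handled separately. Given a feasible sign pattern, take `a i = 1` exactly on the
forward indices; since `|v i| ≤ M` follows from the flux bounds, the big-M constraints then hold.
Conversely, substituting `a i = 1` (resp. `0`) collapses the big-M constraints to the forward
(resp. backward) disjunct, and `|Δ i| ≤ M` follows because the constraints force `M ≥ 0` through
`v i`, and `ε ≥ 0`.
-/

section BigM

variable {𝕜 : Type*} [Ring 𝕜] [LinearOrder 𝕜]

def LooplessDisjunct (ε M d v : 𝕜) : Prop :=
  ((v ≥ 0 ∧ d ≤ -ε) ∨ (v ≤ 0 ∧ d ≥ ε)) ∧ |d| ≤ M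

def BigMConstraint (ε M a d v : 𝕜) : Prop :=
  (-M * a + ε * (1 - a) ≤ d ∧ d ≤ -ε * a + M * (1 - a)) ∧ (-M * (1 - a) ≤ v ∧ v ≤ M * a)

theorem bigMConstraint_one_iff {ε M d v : 𝕜} :
    BigMConstraint ε M 1 d v ↔ (-M ≤ d ∧ d ≤ -ε) ∧ (0 ≤ v ∧ v ≤ M) := by
  simp only [BigMConstraint, sub_self, mul_zero, mul_one, add_zero]

theorem bigMConstraint_zero_iff {ε M d v : 𝕜} :
    BigMConstraint ε M 0 d v ↔ (ε ≤ d ∧ d ≤ M) ∧ (-M ≤ v ∧ v ≤ 0) := by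
  simp only [BigMConstraint, sub_zero, mul_zero, mul_one, zero_add]

variable [IsOrderedRing 𝕜]

theorem exists_bigMConstraint_of_looplessDisjunct {ε M d v : 𝕜} (hv : |v| ≤ M)
    (h : LooplessDisjunct ε M d v) : ∃ a : 𝕜, (a = 0 ∨ a = 1) ∧ BigMConstraint ε M a d v := by
  obtain ⟨hsign, hd⟩ := h
  rw [abs_le] at hv hd
  rcases hsign with ⟨hv0, hdε⟩ | ⟨hv0, hdε⟩
  · exact ⟨1, Or.inr rfl, bigMConstraint_one_iff.2 ⟨⟨hd.1, hdε⟩, hv0, hv.2⟩⟩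
  · exact ⟨0, Or.inl rfl, bigMConstraint_zero_iff.2 ⟨⟨hdε, hd.2⟩, hv.1, hv0⟩⟩

theorem looplessDisjunct_of_bigMConstraint {ε M a d v : 𝕜} (hε : 0 ≤ ε) (ha : a = 0 ∨ a = 1)
    (h : BigMConstraint ε M a d v) : LooplessDisjunct ε M d v := by
  rcases ha with rfl | rfl
  · obtain ⟨⟨hεd, hdM⟩, hMv, hv0⟩ := bigMConstraint_zero_iff.1 h
    exact ⟨Or.inr ⟨hv0, hεd⟩, abs_le.2 ⟨(hMv.trans hv0).trans (hε.trans hεd), hdM⟩⟩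
  · obtain ⟨⟨hMd, hdε⟩, hv0, hvM⟩ := bigMConstraint_one_iff.1 h
    exact ⟨Or.inl ⟨hv0, hdε⟩,
      abs_le.2 ⟨hMd, hdε.trans ((neg_nonpos.2 hε).trans (hv0.trans hvM))⟩⟩

end BigM

theorem bigM_reformulation_correct_general
    {m p : ℕ} (SI : Matrix (Fin m) (Fin p) ℝ) (v l u : Fin p → ℝ)
    (ε M : ℝ) (hε : 0 < ε)
    (hM : ∀ i : Fin p, |l i| ≤ M ∧ |u i| ≤ M)
    (hlv : ∀ i, l i ≤ v i) (hvu : ∀ i, v i ≤ u i) :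
    (∃ μ : Fin m → ℝ, ∀ i : Fin p,
        ((v i ≥ 0 ∧ SI.transpose.mulVec μ i ≤ -ε) ∨
         (v i ≤ 0 ∧ SI.transpose.mulVec μ i ≥ ε)) ∧
        |SI.transpose.mulVec μ i| ≤ M)
    ↔
    (∃ (μ : Fin m → ℝ) (a : Fin p → ℝ), (∀ i, a i = 0 ∨ a i = 1) ∧
      ∀ i : Fin p,
        (-M * a i + ε * (1 - a i) ≤ SI.transpose.mulVec μ i ∧
         SI.transpose.mulVec μ i ≤ -ε * a i + M * (1 - a i)) ∧
        (-M * (1 - a i) ≤ v i ∧ v i ≤ M * a i)) := by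
  have hvM (i : Fin p) : |v i| ≤ M :=
    (abs_le_max_abs_abs (hlv i) (hvu i)).trans (max_le (hM i).1 (hM i).2)
  constructor
  · rintro ⟨μ, h⟩
    choose a ha hconstr using fun i => exists_bigMConstraint_of_looplessDisjunct (hvM i) (h i)
    exact ⟨μ, a, ha, hconstr⟩
  · rintro ⟨μ, a, ha, h⟩
    exact ⟨μ, fun i => looplessDisjunct_of_bigMConstraint hε.le (ha i) (h i)⟩

/-- Correctness of the big-M reformulation of the loopless disjunction. -/
theorem bigM_reformulation_correct
    {m p : ℕ} (SI : Matrix (Fin m) (Fin p) ℝ) (v l u : Fin p → ℝ)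
    (ε M : ℝ) (hε : 0 < ε) (hεM : ε ≤ M)
    (hM : ∀ i : Fin p, |l i| ≤ M ∧ |u i| ≤ M)
    (hlv : ∀ i, l i ≤ v i) (hvu : ∀ i, v i ≤ u i) :
    (∃ μ : Fin m → ℝ, ∀ i : Fin p,
        ((v i ≥ 0 ∧ SI.transpose.mulVec μ i ≤ -ε) ∨
         (v i ≤ 0 ∧ SI.transpose.mulVec μ i ≥ ε)) ∧
        |SI.transpose.mulVec μ i| ≤ M)
    ↔
    (∃ (μ : Fin m → ℝ) (a : Fin p → ℝ), (∀ i, a i = 0 ∨ a i = 1) ∧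
      ∀ i : Fin p,
        (-M * a i + ε * (1 - a i) ≤ SI.transpose.mulVec μ i ∧
         SI.transpose.mulVec μ i ≤ -ε * a i + M * (1 - a i)) ∧
        (-M * (1 - a i) ≤ v i ∧ v i ≤ M * a i)) :=
  bigM_reformulation_correct_general SI v l u ε M hε hM hlv hvu
end

section
/- Sign-compatibility criterion: for a direction assignment a ∈ {0,1}^{|I|}, the subproblem (∃ μ: (S_I^⊤ μ)_i ≤ −ε for a_i = 1, (S_I^⊤ μ)_i ≥ ε for a_i = 0) is infeasible if and only if there exists a nonzero ℓ ∈ null(S_I) with ℓ_i ≥ 0 for all i with a_i = 1 and ℓ_i ≤ 0 for all i with a_i = 0. -/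
/-!
With `σᵢ = 2aᵢ - 1`, the subproblem asks for `μ` with `σᵢ (S_Iᵀ μ)ᵢ ≤ -ε` for all `i`, and a
sign-compatible cycle is a nonzero `ℓ ∈ ker S_I` with `σ ⊙ ℓ ≥ 0`. Rescaling the columns of `S_I`
by `σ` (an involution, as `σ ⊙ σ = 1`) reduces the claim to Gordan's alternative for the rows
`vᵢ` of a matrix: some `μ` has `⟪vᵢ, μ⟫ ≤ -ε` for all `i` iff `0` can be strictly separated from
the convex hull of the `vᵢ` (Hahn–Banach, then rescale `μ`), and `0` lies in that hull iff some
nonzero nonnegative combination of the `vᵢ` vanishes (normalise its weights to sum to `1`).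
-/

open Matrix Set

section Gordan

variable {ι m : Type*} [Fintype ι] [Fintype m]

theorem convexHull_range_eq_image_stdSimplex {E : Type*} [AddCommGroup E] [Module ℝ E]
    (v : ι → E) : convexHull ℝ (range v) = Fintype.linearCombination ℝ v '' stdSimplex ℝ ι := by
  classical
  rw [← convexHull_rangle_single_eq_stdSimplex, LinearMap.image_convexHull, ← range_comp]
  congr
  ext i
  simp [Fintype.linearCombination_apply_single]

theorem zero_mem_convexHull_range_iff {E : Type*} [AddCommGroup E] [Module ℝ E] (v : ι → E) :
    (0 : E) ∈ convexHull ℝ (range v) ↔ ∃ w : ι → ℝ, w ≠ 0 ∧ 0 ≤ w ∧ ∑ i, w i • v i = 0 := by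
  rw [convexHull_range_eq_image_stdSimplex]
  constructor
  · rintro ⟨w, ⟨hw₀, hw₁⟩, hw⟩
    refine ⟨w, ?_, hw₀, hw⟩
    rintro rfl
    simp at hw₁
  · rintro ⟨w, hw_ne, hw₀, hw⟩
    have hsum : 0 < ∑ i, w i := Fintype.sum_pos (lt_of_le_of_ne hw₀ hw_ne.symm)
    refine ⟨(∑ i, w i)⁻¹ • w, ⟨fun i => mul_nonneg (inv_nonneg.2 hsum.le) (hw₀ i), ?_⟩, ?_⟩
    · simp only [Pi.smul_apply, smul_eq_mul, ← Finset.mul_sum]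
      exact inv_mul_cancel₀ hsum.ne'
    · rw [map_smul, Fintype.linearCombination_apply, hw, smul_zero]

theorem Matrix.exists_mulVec_le_neg_iff_zero_notMem_convexHull (B : Matrix ι m ℝ) {ε : ℝ}
    (hε : 0 < ε) : (∃ μ, ∀ i, (B *ᵥ μ) i ≤ -ε) ↔ (0 : m → ℝ) ∉ convexHull ℝ (range B) := by
  constructor
  · rintro ⟨μ, hμ⟩ h0
    have hhalf : convexHull ℝ (range B) ⊆ {x | x ⬝ᵥ μ ≤ -ε} :=
      convexHull_min (range_subset_iff.2 hμ) <| convex_halfSpace_le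
        ⟨fun x y => add_dotProduct x y μ, fun c x => smul_dotProduct c x μ⟩ _
    have h0μ : (0 : m → ℝ) ⬝ᵥ μ ≤ -ε := hhalf h0
    rw [zero_dotProduct] at h0μ
    linarith
  · intro h0
    classical
    obtain ⟨f, u, hfu, hu⟩ := geometric_hahn_banach_closed_point (convex_convexHull ℝ _)
      ((finite_range B).isCompact_convexHull ℝ).isClosed h0
    rw [map_zero] at hu
    set μ := (dotProductEquiv ℝ m).symm f.toLinearMap
    have hμ : ∀ x, x ⬝ᵥ μ = f x := fun x => by
      rw [dotProduct_comm, ← dotProductEquiv_apply_apply, LinearEquiv.apply_symm_apply]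
      rfl
    refine ⟨(ε / -u) • μ, fun i => ?_⟩
    have hi : f (B i) < u := hfu _ (subset_convexHull ℝ _ (mem_range_self i))
    have hc : 0 < ε / -u := div_pos hε (neg_pos.2 hu)
    calc (B *ᵥ (ε / -u) • μ) i = ε / -u * f (B i) := by
          rw [mulVec_smul, Pi.smul_apply, smul_eq_mul, mulVec, hμ]
      _ ≤ ε / -u * u := mul_le_mul_of_nonneg_left hi.le hc.le
      _ = -ε := by field_simp [hu.ne]

-- Gordan's theorem of the alternative.
theorem Matrix.not_exists_mulVec_le_neg_iff_exists_vecMul_eq_zero (B : Matrix ι m ℝ) {ε : ℝ}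
    (hε : 0 < ε) :
    (¬ ∃ μ, ∀ i, (B *ᵥ μ) i ≤ -ε) ↔ ∃ w : ι → ℝ, w ≠ 0 ∧ 0 ≤ w ∧ w ᵥ* B = 0 := by
  rw [B.exists_mulVec_le_neg_iff_zero_notMem_convexHull hε, not_not]
  simpa only [vecMul_eq_sum] using zero_mem_convexHull_range_iff (E := m → ℝ) B

theorem Matrix.not_exists_mul_mulVec_le_neg_iff (B : Matrix ι m ℝ) {σ : ι → ℝ} (hσ : σ * σ = 1)
    {ε : ℝ} (hε : 0 < ε) :
    (¬ ∃ μ, ∀ i, σ i * (B *ᵥ μ) i ≤ -ε) ↔ ∃ ℓ : ι → ℝ, ℓ ≠ 0 ∧ ℓ ᵥ* B = 0 ∧ 0 ≤ σ * ℓ := by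
  classical
  have hrow : ∀ μ i, ((diagonal σ * B) *ᵥ μ) i = σ i * (B *ᵥ μ) i := fun μ i => by
    rw [← mulVec_mulVec, mulVec_diagonal]
  have hcol : ∀ w, w ᵥ* (diagonal σ * B) = (σ * w) ᵥ* B := fun w => by
    rw [← vecMul_vecMul, mul_comm σ]
    congr 1
    ext i
    exact vecMul_diagonal w σ i
  have hinv : ∀ w : ι → ℝ, σ * (σ * w) = w := fun w => by rw [← mul_assoc, hσ, one_mul]
  simp_rw [← hrow, (diagonal σ * B).not_exists_mulVec_le_neg_iff_exists_vecMul_eq_zero hε, hcol]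
  constructor
  · rintro ⟨w, hw_ne, hw₀, hw⟩
    exact ⟨σ * w, fun h => hw_ne (by rw [← hinv w, h, mul_zero]), hw, by rwa [hinv]⟩
  · rintro ⟨ℓ, hℓ_ne, hℓ, hℓσ⟩
    exact ⟨σ * ℓ, fun h => hℓ_ne (by rw [← hinv ℓ, h, mul_zero]), hℓσ, by rwa [hinv]⟩

end Gordan

/-- Sign-compatibility criterion: the subproblem for directions `a` is infeasible
iff there exists a sign-compatible nonzero internal cycle. -/
theorem subproblem_infeasible_iff_sign_compatible_cycle
    {m p : ℕ} (SI : Matrix (Fin m) (Fin p) ℝ) (ε : ℝ) (hε : 0 < ε)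
    (a : Fin p → ℝ) (ha : ∀ i, a i = 0 ∨ a i = 1) :
    (¬ ∃ μ : Fin m → ℝ, ∀ i : Fin p,
      (a i = 1 → SI.transpose.mulVec μ i ≤ -ε) ∧
      (a i = 0 → SI.transpose.mulVec μ i ≥ ε))
    ↔
    (∃ ℓ : Fin p → ℝ, ℓ ≠ 0 ∧ SI.mulVec ℓ = 0 ∧
      (∀ i, a i = 1 → ℓ i ≥ 0) ∧ (∀ i, a i = 0 → ℓ i ≤ 0)) := by
  set σ : Fin p → ℝ := fun i => 2 * a i - 1
  have hσ : σ * σ = 1 := funext fun i => by rcases ha i with h | h <;> norm_num [σ, h]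
  have hsystem : ∀ (x : ℝ) i, ((a i = 1 → x ≤ -ε) ∧ (a i = 0 → x ≥ ε)) ↔ σ i * x ≤ -ε :=
    fun x i => by rcases ha i with h | h <;> norm_num [σ, h]
  have hsign : ∀ ℓ : Fin p → ℝ,
      ((∀ i, a i = 1 → ℓ i ≥ 0) ∧ (∀ i, a i = 0 → ℓ i ≤ 0)) ↔ 0 ≤ σ * ℓ := fun ℓ => by
    rw [← forall_and, Pi.le_def]
    refine forall_congr' fun i => ?_
    rcases ha i with h | h <;> norm_num [σ, h]
  simp_rw [hsystem, hsign, ← vecMul_transpose SI]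
  exact SIᵀ.not_exists_mul_mulVec_le_neg_iff hσ hε
end
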